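/- In the frame 𝔉 of the Chagrov encoding, under any valuation, the formula π₁ = (◇α^1_0 ∨ α^1_0) ∧ ¬◇α^0_0 ∧ ¬◇α^2_0 ∧ p₁ ∧ ¬◇p₁ is true at no more than one point of 𝔉, and if it is true at a point x then x = a^1_j for some j ≥ 0. -/

import Mathlib

inductive MF : Type where
  | var : Nat → MF
  | bot : MF
  | neg : MF → MF
  | and : MF → MF → MF
  | box : MF → MF

namespace MF
def top : MF := neg bot
def or (φ ψ : MF) : MF := neg (and (neg φ) (neg ψ))
def imp (φ ψ : MF) : MF := or (neg φ) ψ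
def dia (φ : MF) : MF := neg (box (neg φ))
def iff (φ ψ : MF) : MF := and (imp φ ψ) (imp ψ φ)
def subst (σ : Nat → MF) : MF → MF
  | .var n => σ n
  | .bot => .bot
  | .neg φ => .neg (subst σ φ)
  | .and φ ψ => .and (subst σ φ) (subst σ ψ)
  | .box φ => .box (subst σ φ)
end MF

/-- Truth at a point of a Kripke model. -/
def sat {W : Type} (R : W → W → Prop) (V : Nat → W → Prop) : W → MF → Prop
  | x, .var n => V n x
  | _, .bot => False
  | x, .neg φ => ¬ sat R V x φ
  | x, .and φ ψ => sat R V x φ ∧ sat R V x ψ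
  | x, .box φ => ∀ y, R x y → sat R V y φ
namespace MF
/- The variable-free Chagrov formulas. -/
def fα : MF := and (dia top) (box (dia top))
def fβ : MF := box bot
def fγ : MF := and (dia fα) (and (dia fβ) (neg (dia (dia fβ))))
def fδ : MF := and (neg fγ) (and (dia fβ) (neg (dia (dia fβ))))
def fδ₁ : MF := and (dia fδ) (neg (dia (dia fδ)))
def fδ₂ : MF := and (dia fδ₁) (neg (dia (dia fδ₁)))
def fγ₁ : MF := and (dia fγ) (and (neg (dia (dia fγ))) (neg (dia fδ)))
def fγ₂ : MF := and (dia fγ₁) (and (neg (dia (dia fγ₁))) (neg (dia fδ)))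
def α₀ : Nat → MF
  | 0 => and (dia fγ) (and (dia fδ) (and (neg (dia (dia fγ))) (neg (dia (dia fδ)))))
  | 1 => and (dia fγ₁) (and (dia fδ₁) (and (neg (dia (dia fγ₁))) (neg (dia (dia fδ₁)))))
  | 2 => and (dia fγ₂) (and (dia fδ₂) (and (neg (dia (dia fγ₂))) (neg (dia (dia fδ₂)))))
  | _ => bot
/-- ⋀_{k ≠ i, k ≤ 2} ¬◇α^k_0 -/
def others (i : Nat) : MF :=
  ((((List.range 3).filter (· ≠ i))).map (fun k => neg (dia (α₀ k)))).foldr MF.and MF.top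
/-- α^i_j, with α^i_{j+1} = ◇α^i_0 ∧ ◇α^i_j ∧ ¬◇◇α^i_j ∧ ⋀_{k≠i}¬◇α^k_0. -/
def alpha (i : Nat) : Nat → MF
  | 0 => α₀ i
  | (j+1) => and (dia (α₀ i)) (and (dia (alpha i j)) (and (neg (dia (dia (alpha i j)))) (others i)))
end MF
/-- Instructions of a Minsky (two-register) machine. -/
inductive Instr : Type where
  | inc1 (s t : Nat)            -- s → ⟨t,1,0⟩
  | inc2 (s t : Nat)            -- s → ⟨t,0,1⟩
  | dec1 (s t t' : Nat)         -- s → ⟨t,-1,0⟩(⟨t',0,0⟩)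
  | dec2 (s t t' : Nat)         -- s → ⟨t,0,-1⟩(⟨t',0,0⟩)
deriving DecidableEq

abbrev Config := Nat × Nat × Nat

def Instr.src : Instr → Nat
  | .inc1 s _ => s
  | .inc2 s _ => s
  | .dec1 s _ _ => s
  | .dec2 s _ _ => s

/-- One-step transformation of configurations by an instruction. -/
def Instr.Step : Instr → Config → Config → Prop
  | .inc1 s t, (s₁, m, n), c => s₁ = s ∧ c = (t, m+1, n)
  | .inc2 s t, (s₁, m, n), c => s₁ = s ∧ c = (t, m, n+1)
  | .dec1 s t t', (s₁, m, n), c =>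
      s₁ = s ∧ ((m ≠ 0 ∧ c = (t, m-1, n)) ∨ (m = 0 ∧ c = (t', 0, n)))
  | .dec2 s t t', (s₁, m, n), c =>
      s₁ = s ∧ ((n ≠ 0 ∧ c = (t, m, n-1)) ∨ (n = 0 ∧ c = (t', m, 0)))

/-- P : 𝔞 → 𝔟 : reachability in finitely many (possibly zero) steps. -/
def Reach (P : List Instr) : Config → Config → Prop :=
  Relation.ReflTransGen (fun c c' => ∃ I ∈ P, I.Step c c')

/-- At most one instruction with a given state on the left-hand side. -/
def Deterministic (P : List Instr) : Prop :=
  ∀ I ∈ P, ∀ J ∈ P, I.src = J.src → I = J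
/-- The points of the frame 𝔉 of Fig. 1. -/
inductive Pt : Type where
  | a | b | g | g1 | g2 | d | d1 | d2
  | chain (i j : Nat)          -- the point a^i_j
  | e (t k l : Nat)            -- the point e(t,k,l)
deriving DecidableEq

/-- Membership in the frame: e(t,k,l) exists only for reachable configurations. -/
def Pt.Ok (P : List Instr) (c₀ : Config) : Pt → Prop
  | .chain i _ => i ≤ 2
  | .e t k l => Reach P c₀ (t, k, l)
  | _ => True

/-- The base relation whose transitive closure is the accessibility relation of 𝔉. -/
def Pt.R0 : Pt → Pt → Prop
  | .a, .a => True
  | .g, .a => True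
  | .g, .b => True
  | .d, .b => True
  | .g1, .g => True
  | .g2, .g1 => True
  | .d1, .d => True
  | .d2, .d1 => True
  | .chain 0 0, .g => True
  | .chain 0 0, .d => True
  | .chain 1 0, .g1 => True
  | .chain 1 0, .d1 => True
  | .chain 2 0, .g2 => True
  | .chain 2 0, .d2 => True
  | .chain i (j+1), .chain i' j' => i = i' ∧ j = j'
  | .e t _ _, .chain 0 t' => t = t'
  | .e _ k _, .chain 1 k' => k = k'
  | .e _ _ l, .chain 2 l' => l = l'
  | _, _ => False

/-- The carrier of the frame 𝔉 built from P and 𝔞 = c₀. -/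
def FW (P : List Instr) (c₀ : Config) : Type := {p : Pt // Pt.Ok P c₀ p}

/-- The accessibility relation of 𝔉: the transitive closure of R0. -/
def FR (P : List Instr) (c₀ : Config) : FW P c₀ → FW P c₀ → Prop :=
  fun x y => Relation.TransGen Pt.R0 x.1 y.1

namespace MF
/-- π₁ = (◇α^1_0 ∨ α^1_0) ∧ ¬◇α^0_0 ∧ ¬◇α^2_0 ∧ p₁ ∧ ¬◇p₁ (p₁ = var 0). -/
def π₁ : MF :=
  and (or (dia (α₀ 1)) (α₀ 1)) (and (neg (dia (α₀ 0))) (and (neg (dia (α₀ 2)))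
    (and (var 0) (neg (dia (var 0))))))
end MF

/-!
Each variable-free formula occurring in `π₁` defines a fixed set of points of `𝔉`, computed
bottom-up from the explicit description of the transitive closure of `R0`; in particular `α^1_0`
holds only at `a^1_0` and `α^0_0` only at `a^0_0`. A point satisfying `◇α^1_0 ∨ α^1_0` is either
some `a^1_j` or a point `e(t,k,l)`, and the latter see `a^0_0`; so `¬◇α^0_0` leaves only the
`a^1_j`. Of two points `a^1_j`, `a^1_j'` with `j < j'` the second sees the first, so they cannot
both satisfy `p₁ ∧ ¬◇p₁`.

The computation takes place on all of `Pt`: the frame `𝔉` is a generated subframe of it, and the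
points `e(t,k,l)` of unreachable configurations are seen by no point, so they do not affect it.
-/

open Relation

theorem sat_subtype_iff {W : Type} {R : W → W → Prop} {U : W → Prop}
    (hU : ∀ {x y}, U x → R x y → U y) (V : ℕ → Subtype U → Prop) (x : Subtype U) (φ : MF) :
    sat (fun x y : Subtype U => R x.1 y.1) V x φ ↔
      sat R (fun n w => ∃ h : U w, V n ⟨w, h⟩) x.1 φ := by
  induction φ generalizing x with
  | var n => exact ⟨fun h => ⟨x.2, h⟩, fun ⟨_, h⟩ => h⟩
  | bot => rfl
  | neg φ ih => exact not_congr (ih x)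
  | and φ ψ ihφ ihψ => exact and_congr (ihφ x) (ihψ x)
  | box φ ih =>
    exact ⟨fun h y hxy => (ih ⟨y, hU x.2 hxy⟩).1 (h _ hxy), fun h y hxy => (ih y).2 (h y.1 hxy)⟩

theorem Nat.forall_le_iff_eq_zero {n : ℕ} : (∀ m, n ≤ m) ↔ n = 0 :=
  ⟨fun h => Nat.le_zero.1 (h 0), fun h m => h ▸ m.zero_le⟩

namespace Pt

/-- The points outside the chain seen from `a^i_0`. -/
def tail : ℕ → Pt → Prop
  | 0, y => y = g ∨ y = d ∨ y = a ∨ y = b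
  | 1, y => y = g1 ∨ y = d1 ∨ tail 0 y
  | 2, y => y = g2 ∨ y = d2 ∨ tail 1 y
  | _, _ => False

def Above : Pt → Pt → Prop
  | a, y => y = a
  | b, _ => False
  | g, y => y = a ∨ y = b
  | d, y => y = b
  | g1, y => y = g ∨ y = a ∨ y = b
  | g2, y => y = g1 ∨ y = g ∨ y = a ∨ y = b
  | d1, y => y = d ∨ y = b
  | d2, y => y = d1 ∨ y = d ∨ y = b
  | chain i j, y => (∃ j' < j, y = chain i j') ∨ tail i y
  | e t k l, y => (∃ t' ≤ t, y = chain 0 t') ∨ (∃ k' ≤ k, y = chain 1 k') ∨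
      (∃ l' ≤ l, y = chain 2 l') ∨ tail 2 y

/-- Excludes the junk chains `i ≥ 3` of `Pt`. -/
def Low : Pt → Prop
  | chain i _ => i ≤ 2
  | _ => True

theorem forall_low_iff {Q : Pt → Prop} :
    (∀ x, Low x → Q x) ↔ Q a ∧ Q b ∧ Q g ∧ Q d ∧ Q g1 ∧ Q g2 ∧ Q d1 ∧ Q d2 ∧
      (∀ j, Q (chain 0 j)) ∧ (∀ j, Q (chain 1 j)) ∧ (∀ j, Q (chain 2 j)) ∧
      ∀ t k l, Q (e t k l) := by
  refine ⟨fun h => ?_, fun h x hx => ?_⟩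
  · refine ⟨?_, ?_, ?_, ?_, ?_, ?_, ?_, ?_, ?_, ?_, ?_, ?_⟩ <;> intros <;>
      exact h _ (by simp [Low])
  · obtain ⟨ha, hb, hg, hd, hg1, hg2, hd1, hd2, h0, h1, h2, he⟩ := h
    rcases x with _ | _ | _ | _ | _ | _ | _ | _ | ⟨i, j⟩ | ⟨t, k, l⟩ <;> try assumption
    · change i ≤ 2 at hx
      interval_cases i <;> apply_assumption
    · exact he t k l

@[simp] theorem not_tail_chain {i i' j : ℕ} : ¬ tail i (chain i' j) := by
  rcases i with _ | _ | _ | i <;> simp [tail]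

@[simp] theorem not_tail_e {i t k l : ℕ} : ¬ tail i (e t k l) := by
  rcases i with _ | _ | _ | i <;> simp [tail]

theorem tail_mono {i i' : ℕ} {y : Pt} (hi : i ≤ i') (hi' : i' ≤ 2) (h : tail i y) : tail i' y := by
  interval_cases i' <;> interval_cases i <;> simp_all [tail]

theorem tail_above {i : ℕ} {y z : Pt} (hy : tail i y) (hz : Above y z) : tail i z := by
  rcases i with _ | _ | _ | i <;> cases y <;> simp_all [Above, tail] <;>
    obtain rfl | rfl | rfl | rfl := hz <;> simp

theorem above_trans {x y z : Pt} (hxy : Above x y) (hyz : Above y z) : Above x z := by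
  rcases x with _ | _ | _ | _ | _ | _ | _ | _ | ⟨i, j⟩ | ⟨t, k, l⟩
  case chain =>
    rcases hxy with ⟨j', hj', rfl⟩ | hy
    · rcases hyz with ⟨j'', hj'', rfl⟩ | hz
      exacts [Or.inl ⟨j'', hj''.trans hj', rfl⟩, Or.inr hz]
    · exact Or.inr (tail_above hy hyz)
  case e =>
    have h2 {i : ℕ} (hi : i ≤ 2) (hz : tail i z) : tail 2 z := tail_mono hi le_rfl hz
    rcases hxy with ⟨m, hm, rfl⟩ | ⟨m, hm, rfl⟩ | ⟨m, hm, rfl⟩ | hy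
    · rcases hyz with ⟨m', hm', rfl⟩ | hz
      exacts [Or.inl ⟨m', by omega, rfl⟩, Or.inr (Or.inr (Or.inr (h2 (by omega) hz)))]
    · rcases hyz with ⟨m', hm', rfl⟩ | hz
      exacts [Or.inr (Or.inl ⟨m', by omega, rfl⟩), Or.inr (Or.inr (Or.inr (h2 (by omega) hz)))]
    · rcases hyz with ⟨m', hm', rfl⟩ | hz
      exacts [Or.inr (Or.inr (Or.inl ⟨m', by omega, rfl⟩)), Or.inr (Or.inr (Or.inr hz))]
    · exact Or.inr (Or.inr (Or.inr (tail_above hy hyz)))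
  all_goals
    simp only [Above] at hxy <;> rcases hxy with rfl | rfl | rfl | rfl <;> simp_all [Above]

theorem above_of_R0 {x y : Pt} (h : R0 x y) : Above x y := by
  rcases x with _ | _ | _ | _ | _ | _ | _ | _ | ⟨_ | _ | _ | i, _ | j⟩ | ⟨t, k, l⟩ <;>
    rcases y with _ | _ | _ | _ | _ | _ | _ | _ | ⟨_ | _ | _ | i', j'⟩ | ⟨t', k', l'⟩ <;>
    simp_all [R0, Above, tail]

theorem reflTransGen_chain {i j j' : ℕ} (h : j' ≤ j) : ReflTransGen R0 (chain i j) (chain i j') := by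
  induction j, h using Nat.le_induction with
  | base => rfl
  | succ n _ ih => exact .head (b := chain i n) (by simp [R0]) ih

theorem transGen_chain {i j j' : ℕ} (h : j' < j) : TransGen R0 (chain i j) (chain i j') := by
  obtain ⟨n, rfl⟩ := Nat.exists_eq_add_of_lt h
  exact .head' (b := chain i (j' + n)) (by simp [R0]) (reflTransGen_chain (by omega))

theorem transGen_of_above {x y : Pt} (h : Above x y) : TransGen R0 x y := by
  have aa : TransGen R0 a a := .single trivial
  have ga : TransGen R0 g a := .single trivial
  have gb : TransGen R0 g b := .single trivial
  have db : TransGen R0 d b := .single trivial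
  have g1g : TransGen R0 g1 g := .single trivial
  have g2g1 : TransGen R0 g2 g1 := .single trivial
  have d1d : TransGen R0 d1 d := .single trivial
  have d2d1 : TransGen R0 d2 d1 := .single trivial
  have c0g : TransGen R0 (chain 0 0) g := .single trivial
  have c0d : TransGen R0 (chain 0 0) d := .single trivial
  have c1g1 : TransGen R0 (chain 1 0) g1 := .single trivial
  have c1d1 : TransGen R0 (chain 1 0) d1 := .single trivial
  have c2g2 : TransGen R0 (chain 2 0) g2 := .single trivial
  have c2d2 : TransGen R0 (chain 2 0) d2 := .single trivial
  have of_tail {i : ℕ} {y : Pt} (h : tail i y) : TransGen R0 (chain i 0) y := by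
    match i, h with
    | 0, h | 1, h | 2, h =>
      simp only [tail] at h
      rcases h with rfl | rfl | rfl | rfl | rfl | rfl | rfl | rfl <;>
        solve_by_elim (maxDepth := 10) [TransGen.trans]
    | _ + 3, h => simp [tail] at h
  rcases x with _ | _ | _ | _ | _ | _ | _ | _ | ⟨i, j⟩ | ⟨t, k, l⟩
  case chain =>
    rcases h with ⟨j', hj', rfl⟩ | hy
    · exact transGen_chain hj'
    · exact .trans_right (reflTransGen_chain (Nat.zero_le j)) (of_tail hy)
  case e =>
    have he {i m m' : ℕ} (hm : m' ≤ m) (hi : R0 (e t k l) (chain i m)) :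
        TransGen R0 (e t k l) (chain i m') := .trans_left (.single hi) (reflTransGen_chain hm)
    rcases h with ⟨m, hm, rfl⟩ | ⟨m, hm, rfl⟩ | ⟨m, hm, rfl⟩ | hy
    · exact he hm rfl
    · exact he hm rfl
    · exact he hm rfl
    · exact (he (i := 2) (Nat.zero_le l) rfl).trans (of_tail hy)
  all_goals
    simp only [Above] at h <;> rcases h with rfl | rfl | rfl | rfl <;>
      solve_by_elim (maxDepth := 10) [TransGen.trans]

theorem transGen_R0_eq_above : TransGen R0 = Above := by
  ext x y
  refine ⟨fun h => ?_, transGen_of_above⟩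
  induction h with
  | single h => exact above_of_R0 h
  | tail _ h ih => exact above_trans ih (above_of_R0 h)

theorem Low.above {x y : Pt} (hx : Low x) (h : Above x y) : Low y := by
  rcases x with _ | _ | _ | _ | _ | _ | _ | _ | ⟨i, j⟩ | ⟨t, k, l⟩ <;>
    rcases y with _ | _ | _ | _ | _ | _ | _ | _ | ⟨i', j'⟩ | ⟨t', k', l'⟩ <;>
    simp_all [Above, Low]
  omega

theorem Ok.above {P : List Instr} {c₀ : Config} {x y : Pt} (hx : Ok P c₀ x) (h : Above x y) :
    Ok P c₀ y := by
  rcases x with _ | _ | _ | _ | _ | _ | _ | _ | ⟨i, j⟩ | ⟨t, k, l⟩ <;>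
    rcases y with _ | _ | _ | _ | _ | _ | _ | _ | ⟨i', j'⟩ | ⟨t', k', l'⟩ <;>
    simp_all [Above, Ok]
  omega

theorem Ok.low {P : List Instr} {c₀ : Config} {x : Pt} (h : Ok P c₀ x) : Low x := by
  cases x <;> first | exact h | trivial

theorem exists_eq_chain_one_of_above : ∀ x, Low x → (Above x (chain 1 0) ∨ x = chain 1 0) →
    ¬ Above x (chain 0 0) → ∃ j, x = chain 1 j :=
  forall_low_iff.2 <| by simp [Above]

end Pt

open Pt

def Defines (φ : MF) (S : Pt → Prop) : Prop :=
  ∀ (V : ℕ → Pt → Prop) (x : Pt), Low x → (sat Above V x φ ↔ S x)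

namespace Defines

variable {φ ψ : MF} {S T : Pt → Prop}

theorem congr (h : Defines φ S) (hST : ∀ x, Low x → (S x ↔ T x)) : Defines φ T :=
  fun V x hx => (h V x hx).trans (hST x hx)

theorem bot : Defines .bot fun _ => False := fun _ _ _ => Iff.rfl

theorem neg (h : Defines φ S) : Defines (.neg φ) fun x => ¬ S x :=
  fun V x hx => not_congr (h V x hx)

theorem and (hφ : Defines φ S) (hψ : Defines ψ T) : Defines (.and φ ψ) fun x => S x ∧ T x :=
  fun V x hx => and_congr (hφ V x hx) (hψ V x hx)

theorem or (hφ : Defines φ S) (hψ : Defines ψ T) : Defines (.or φ ψ) fun x => S x ∨ T x :=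
  (hφ.neg.and hψ.neg).neg.congr fun _ _ => by tauto

theorem box (h : Defines φ S) : Defines (.box φ) fun x => ∀ y, Above x y → S y :=
  fun V _ hx => forall_congr' fun y => imp_congr_right fun hxy => h V y (hx.above hxy)

theorem dia (h : Defines φ S) : Defines (.dia φ) fun x => ∃ y, Above x y ∧ S y :=
  (h.neg.box.neg).congr fun _ _ => by push Not; rfl

theorem top : Defines .top fun _ => True := bot.neg.congr fun _ _ => not_false_iff

end Defines

open MF

section

attribute [local simp] or_and_right exists_or or_imp forall_and Nat.forall_le_iff_eq_zero

theorem defines_fβ : Defines fβ (· = b) :=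
  Defines.bot.box.congr <| forall_low_iff.2 <| by simp [Above, tail]

theorem defines_fα : Defines fα (· = a) :=
  (Defines.top.dia.and Defines.top.dia.box).congr <| forall_low_iff.2 <| by simp [Above, tail]

theorem defines_fγ : Defines fγ (· = g) :=
  (defines_fα.dia.and (defines_fβ.dia.and defines_fβ.dia.dia.neg)).congr <|
    forall_low_iff.2 <| by simp [Above, tail]

theorem defines_fδ : Defines fδ (· = d) :=
  (defines_fγ.neg.and (defines_fβ.dia.and defines_fβ.dia.dia.neg)).congr <|
    forall_low_iff.2 <| by simp [Above, tail]

theorem defines_fγ₁ : Defines fγ₁ (· = g1) :=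
  (defines_fγ.dia.and (defines_fγ.dia.dia.neg.and defines_fδ.dia.neg)).congr <|
    forall_low_iff.2 <| by simp [Above, tail]

theorem defines_fδ₁ : Defines fδ₁ (fun x => x = d1 ∨ x = chain 0 0) :=
  (defines_fδ.dia.and defines_fδ.dia.dia.neg).congr <|
    forall_low_iff.2 <| by simp [Above, tail]

theorem defines_α₀_one : Defines (α₀ 1) (· = chain 1 0) :=
  (defines_fγ₁.dia.and (defines_fδ₁.dia.and (defines_fγ₁.dia.dia.neg.and
    defines_fδ₁.dia.dia.neg))).congr <| forall_low_iff.2 <| by simp [Above, tail]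

theorem defines_α₀_zero : Defines (α₀ 0) (· = chain 0 0) :=
  (defines_fγ.dia.and (defines_fδ.dia.and (defines_fγ.dia.dia.neg.and
    defines_fδ.dia.dia.neg))).congr <| forall_low_iff.2 <| by simp [Above, tail]

end

theorem exists_eq_chain_one_of_sat_π₁ {V : ℕ → Pt → Prop} {x : Pt} (hx : Low x)
    (h : sat Above V x π₁) : ∃ j, x = chain 1 j := by
  obtain ⟨h1, h0, -⟩ := h
  have h1 : Above x (chain 1 0) ∨ x = chain 1 0 := by
    simpa using ((defines_α₀_one.dia.or defines_α₀_one) V x hx).1 h1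
  have h0 : ¬ Above x (chain 0 0) := by simpa using (defines_α₀_zero.dia.neg V x hx).1 h0
  exact exists_eq_chain_one_of_above x hx h1 h0

theorem eq_of_sat_π₁ {V : ℕ → Pt → Prop} {x y : Pt} (hx : Low x) (hy : Low y)
    (h : sat Above V x π₁) (h' : sat Above V y π₁) : x = y := by
  obtain ⟨j, rfl⟩ := exists_eq_chain_one_of_sat_π₁ hx h
  obtain ⟨j', rfl⟩ := exists_eq_chain_one_of_sat_π₁ hy h'
  obtain ⟨-, -, -, hvx, hnx⟩ := h
  obtain ⟨-, -, -, hvy, hny⟩ := h'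
  rcases lt_trichotomy j j' with hj | rfl | hj
  · exact (hny fun hbox => hbox _ (Or.inl ⟨j, hj, rfl⟩) hvx).elim
  · rfl
  · exact (hnx fun hbox => hbox _ (Or.inl ⟨j', hj, rfl⟩) hvy).elim

theorem sat_FR_iff {P : List Instr} {c₀ : Config} (V : ℕ → FW P c₀ → Prop) (x : FW P c₀)
    (φ : MF) : sat (FR P c₀) V x φ ↔ sat Above (fun n p => ∃ h, V n ⟨p, h⟩) x.1 φ := by
  have hFR : FR P c₀ = fun x y => Above x.1 y.1 := by unfold FR; rw [transGen_R0_eq_above]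
  rw [hFR]
  exact sat_subtype_iff (fun hx h => hx.above h) V x φ

/-- in 𝔉, under any valuation, π₁ holds at no more than one point,
and any such point is of the form a^1_j. -/
theorem pi1_at_most_one :
    ∀ (P : List Instr) (c₀ : Config), Deterministic P →
      ∀ (V : Nat → FW P c₀ → Prop),
        (∀ x y : FW P c₀, sat (FR P c₀) V x MF.π₁ → sat (FR P c₀) V y MF.π₁ → x = y) ∧
        (∀ x : FW P c₀, sat (FR P c₀) V x MF.π₁ → ∃ j, x.1 = Pt.chain 1 j) := by
  intro P c₀ _ V
  refine ⟨fun x y hx hy => Subtype.ext ?_, fun x hx => ?_⟩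
  · exact eq_of_sat_π₁ x.2.low y.2.low ((sat_FR_iff V x _).1 hx) ((sat_FR_iff V y _).1 hy)
  · exact exists_eq_chain_one_of_sat_π₁ x.2.low ((sat_FR_iff V x _).1 hx)
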